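/- Let η > 0 and c₁₀, c₀₁ ∈ ℝ. Let C : ℝ → M₃(ℝ) take symmetric positive definite values, let Cᵢ : ℝ → M₃(ℝ) be differentiable with Cᵢ(t) invertible, and suppose Cᵢ satisfies the Maxwell flow rule Cᵢ'(t) = (1/η)·(c₁₀·C̄(t)·Cᵢ(t)⁻¹ − c₀₁·Cᵢ(t)·C̄(t)⁻¹)^D·Cᵢ(t) for all t, where C̄(t) := (det C(t))^{-1/3}·C(t). Let F₀ be an invertible real 3×3 matrix with det F₀ = 1. Then the transformed variable Cᵢⁿᵉʷ(t) := F₀⁻ᵀ·Cᵢ(t)·F₀⁻¹ satisfies the same flow rule with C(t) replaced by Cⁿᵉʷ(t) := F₀⁻ᵀ·C(t)·F₀⁻¹, i.e. (Cᵢⁿᵉʷ)'(t) = (1/η)·(c₁₀·C̄ⁿᵉʷ(t)·(Cᵢⁿᵉʷ(t))⁻¹ − c₀₁·Cᵢⁿᵉʷ(t)·(C̄ⁿᵉʷ(t))⁻¹)^D·Cᵢⁿᵉʷ(t) for all t. Thus the continuous multiplicative Maxwell model is w-invariant under volume-preserving changes of the reference configuration. -/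
import Mathlib

open Matrix

abbrev Mat := Matrix (Fin 3) (Fin 3) ℝ

attribute [local instance] Matrix.frobeniusNormedAddCommGroup Matrix.frobeniusNormedSpace

/-- The unimodular part of a matrix. -/
noncomputable def unimod (M : Mat) : Mat := (M.det ^ (-(1 : ℝ) / 3)) • M

/-- The deviatoric part of a matrix. -/
noncomputable def dev (M : Mat) : Mat := M - (M.trace / 3) • (1 : Mat)

/-- The right-hand side of the Maxwell flow rule for the Mooney–Rivlin potential. -/
noncomputable def maxwellRHS (η c10 c01 : ℝ) (C Ci : Mat) : Mat :=
  (1 / η) • (dev (c10 • (unimod C * Ci⁻¹) - c01 • (Ci * (unimod C)⁻¹)) * Ci)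

attribute [local instance] Matrix.frobeniusNormedRing Matrix.frobeniusNormedAlgebra

lemma conj_dev (A X : Mat) (hA : IsUnit A.det) :
    dev (A * X * A⁻¹) = A * dev X * A⁻¹ := by
  have htr : (A * X * A⁻¹).trace = X.trace := by
    rw [Matrix.trace_mul_cycle, Matrix.nonsing_inv_mul _ hA, Matrix.one_mul]
  simp only [dev, htr, Matrix.mul_sub, Matrix.sub_mul, Matrix.mul_smul, Matrix.smul_mul,
    Matrix.mul_one, Matrix.one_mul, Matrix.mul_nonsing_inv _ hA]

lemma conj_RHS (η c10 c01 : ℝ) (Cm Cim F0 : Mat) (hdetF0 : F0.det = 1) :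
    maxwellRHS η c10 c01 ((F0⁻¹)ᵀ * Cm * F0⁻¹) ((F0⁻¹)ᵀ * Cim * F0⁻¹)
      = (F0⁻¹)ᵀ * maxwellRHS η c10 c01 Cm Cim * F0⁻¹ := by
  set A := (F0⁻¹)ᵀ with hAdef
  set B := F0⁻¹ with hBdef
  have hdetB : B.det = 1 := by
    simp [hBdef, Matrix.det_nonsing_inv, hdetF0]
  have hdetA : A.det = 1 := by rw [hAdef, Matrix.det_transpose, hdetB]
  have hAu : IsUnit A.det := by rw [hdetA]; exact isUnit_one
  have hBu : IsUnit B.det := by rw [hdetB]; exact isUnit_one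
  have huni : ∀ M : Mat, unimod (A * M * B) = A * unimod M * B := by
    intro M
    simp only [unimod, Matrix.det_mul, hdetA, hdetB, one_mul, mul_one,
      Matrix.mul_smul, Matrix.smul_mul]
  have hinvc : ∀ M : Mat, (A * M * B)⁻¹ = B⁻¹ * M⁻¹ * A⁻¹ := by
    intro M
    rw [Matrix.mul_inv_rev, Matrix.mul_inv_rev, Matrix.mul_assoc]
  have key : c10 • (unimod (A * Cm * B) * (A * Cim * B)⁻¹)
      - c01 • ((A * Cim * B) * (unimod (A * Cm * B))⁻¹)
      = A * (c10 • (unimod Cm * Cim⁻¹) - c01 • (Cim * (unimod Cm)⁻¹)) * A⁻¹ := by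
    rw [huni, hinvc, hinvc]
    simp only [Matrix.mul_sub, Matrix.sub_mul, Matrix.mul_smul, Matrix.smul_mul,
      Matrix.mul_assoc, Matrix.mul_nonsing_inv_cancel_left _ _ hBu]
  show (1 / η) • (dev (c10 • (unimod (A * Cm * B) * (A * Cim * B)⁻¹)
      - c01 • ((A * Cim * B) * (unimod (A * Cm * B))⁻¹)) * (A * Cim * B))
    = A * ((1 / η) • (dev (c10 • (unimod Cm * Cim⁻¹) - c01 • (Cim * (unimod Cm)⁻¹)) * Cim)) * B
  rw [key, conj_dev _ _ hAu]
  simp only [Matrix.mul_smul, Matrix.smul_mul, Matrix.mul_assoc,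
    Matrix.nonsing_inv_mul_cancel_left _ _ hAu]

theorem maxwell_w_invariance (η c10 c01 : ℝ) (hη : 0 < η)
    (C Ci : ℝ → Mat) (hC : ∀ t, (C t).PosDef) (hCi : ∀ t, IsUnit (Ci t))
    (hflow : ∀ t, HasDerivAt Ci (maxwellRHS η c10 c01 (C t) (Ci t)) t)
    (F0 : Mat) (hF0 : IsUnit F0) (hdetF0 : F0.det = 1) :
    ∀ t, HasDerivAt (fun s => (F0⁻¹)ᵀ * Ci s * F0⁻¹)
      (maxwellRHS η c10 c01 ((F0⁻¹)ᵀ * C t * F0⁻¹) ((F0⁻¹)ᵀ * Ci t * F0⁻¹)) t := by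
  intro t
  rw [conj_RHS η c10 c01 (C t) (Ci t) F0 hdetF0]
  exact ((hflow t).const_mul _).mul_const _
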